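/- Let P, R_x be symmetric positive definite m×m matrices with eigenvalues υ₁ ≥ ... ≥ υ_m > 0 and γ₁ ≥ ... ≥ γ_m > 0 respectively, and suppose the condition number υ₁/υ_m of P is large in the following sense: for a fixed index r < m, if ε > υ_{r+1} γ₁ then the r-truncated eigenvalue sum of K = εP⁻¹ − R_x is strictly smaller than its full trace: Σ_{i=1}^r δ_i < Σ_{i=1}^m δ_i, where δ₁ ≤ ... ≤ δ_m are the eigenvalues of K. -/

import Mathlib

/-! A Courant–Fischer argument shows `δ_{r+1} > 0`; since `δ` is nondecreasing, the omitted terms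
`δ_{r+1}, …, δ_m` of the trace are then all positive. Dimension counting gives a nonzero `x` in
the span of the eigenvectors of `K` for `δ_1, …, δ_{r+1}` and of those of `P` for
`υ_{r+1}, …, υ_m`, so that
`δ_{r+1} ‖x‖² ≥ xᵀ K x = ε xᵀ P⁻¹ x - xᵀ R_x x ≥ (ε / υ_{r+1} - γ_1) ‖x‖² > 0`. -/

open Matrix

theorem Module.Dual.exists_ne_zero_forall_apply_eq_zero {K V ι : Type*} [Field K] [AddCommGroup V]
    [Module K V] [FiniteDimensional K V] [Fintype ι] (f : ι → Module.Dual K V)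
    (h : Fintype.card ι < Module.finrank K V) : ∃ x ≠ 0, ∀ i, f i x = 0 := by
  have hker : LinearMap.ker (LinearMap.pi f) ≠ ⊥ :=
    LinearMap.ker_ne_bot_of_finrank_lt (by rwa [Module.finrank_fintype_fun_eq_card])
  obtain ⟨x, hx, hx0⟩ := Submodule.exists_mem_ne_zero_of_ne_bot hker
  exact ⟨x, hx0, fun i => congrFun (LinearMap.mem_ker.1 hx) i⟩

namespace Matrix

theorem exists_ne_zero_mulVec_eq_zero_of_lt_of_gt {K ι : Type*} [Field K] [Fintype ι]
    [LinearOrder ι] (A B : Matrix ι ι K) (k : ι) :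
    ∃ x ≠ 0, (∀ j, k < j → (A *ᵥ x) j = 0) ∧ ∀ j, j < k → (B *ᵥ x) j = 0 := by
  classical
  let f : {j // j ≠ k} → Module.Dual K (ι → K) := fun j =>
    if k < j.1 then LinearMap.proj j.1 ∘ₗ A.mulVecLin else LinearMap.proj j.1 ∘ₗ B.mulVecLin
  have hcard : Fintype.card {j // j ≠ k} < Module.finrank K (ι → K) := by
    rw [Fintype.card_subtype_compl, Fintype.card_subtype_eq, Module.finrank_fintype_fun_eq_card]
    exact Nat.sub_lt (Fintype.card_pos_iff.2 ⟨k⟩) one_pos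
  obtain ⟨x, hx0, hx⟩ := Module.Dual.exists_ne_zero_forall_apply_eq_zero f hcard
  refine ⟨x, hx0, fun j hj => ?_, fun j hj => ?_⟩
  · simpa [f, hj] using hx ⟨j, hj.ne'⟩
  · simpa [f, hj.not_gt] using hx ⟨j, hj.ne⟩

section QuadraticForm

variable {R n : Type*} [Fintype n] [DecidableEq n]

theorem dotProduct_conj_diagonal_mulVec [CommSemiring R] (M : Matrix n n R) (d x : n → R) :
    x ⬝ᵥ ((M * diagonal d * Mᵀ) *ᵥ x) = (Mᵀ *ᵥ x) ⬝ᵥ (diagonal d *ᵥ (Mᵀ *ᵥ x)) := by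
  rw [← mulVec_mulVec, ← mulVec_mulVec, dotProduct_mulVec, ← mulVec_transpose]

theorem dotProduct_transpose_mulVec_self [CommSemiring R] {M : Matrix n n R} (hM : M * Mᵀ = 1)
    (x : n → R) : (Mᵀ *ᵥ x) ⬝ᵥ (Mᵀ *ᵥ x) = x ⬝ᵥ x := by
  rw [dotProduct_mulVec, vecMul_transpose, mulVec_mulVec, hM, one_mulVec]

variable [CommRing R] [LinearOrder R] [IsStrictOrderedRing R] {M : Matrix n n R} {d x : n → R}
  {c : R}

theorem dotProduct_conj_diagonal_mulVec_le (hM : M * Mᵀ = 1)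
    (h : ∀ j, (Mᵀ *ᵥ x) j ≠ 0 → d j ≤ c) :
    x ⬝ᵥ ((M * diagonal d * Mᵀ) *ᵥ x) ≤ c * (x ⬝ᵥ x) := by
  rw [dotProduct_conj_diagonal_mulVec, ← dotProduct_transpose_mulVec_self hM x, dotProduct,
    dotProduct, Finset.mul_sum]
  refine Finset.sum_le_sum fun j _ => ?_
  rw [mulVec_diagonal]
  by_cases hj : (Mᵀ *ᵥ x) j = 0
  · simp [hj]
  · nlinarith [h j hj, mul_self_nonneg ((Mᵀ *ᵥ x) j)]

theorem le_dotProduct_conj_diagonal_mulVec (hM : M * Mᵀ = 1)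
    (h : ∀ j, (Mᵀ *ᵥ x) j ≠ 0 → c ≤ d j) :
    c * (x ⬝ᵥ x) ≤ x ⬝ᵥ ((M * diagonal d * Mᵀ) *ᵥ x) := by
  rw [dotProduct_conj_diagonal_mulVec, ← dotProduct_transpose_mulVec_self hM x, dotProduct,
    dotProduct, Finset.mul_sum]
  refine Finset.sum_le_sum fun j _ => ?_
  rw [mulVec_diagonal]
  by_cases hj : (Mᵀ *ᵥ x) j = 0
  · simp [hj]
  · nlinarith [h j hj, mul_self_nonneg ((Mᵀ *ᵥ x) j)]

end QuadraticForm

theorem inv_conj_diagonal {R n : Type*} [Field R] [Fintype n] [DecidableEq n]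
    {M : Matrix n n R} {d : n → R} (hM : M * Mᵀ = 1) (hd : ∀ i, d i ≠ 0) :
    (M * diagonal d * Mᵀ)⁻¹ = M * diagonal d⁻¹ * Mᵀ := by
  have hdd : diagonal d * diagonal d⁻¹ = 1 := by
    rw [diagonal_mul_diagonal, ← diagonal_one]
    exact congrArg diagonal (funext fun i => mul_inv_cancel₀ (hd i))
  refine inv_eq_right_inv ?_
  calc M * diagonal d * Mᵀ * (M * diagonal d⁻¹ * Mᵀ)
      = M * (diagonal d * (Mᵀ * M) * diagonal d⁻¹) * Mᵀ := by simp only [Matrix.mul_assoc]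
    _ = 1 := by rw [mul_eq_one_comm.mp hM, Matrix.mul_one, hdd, Matrix.mul_one, hM]

theorem pos_of_posDef_conj_diagonal {n : Type*} [Fintype n] [DecidableEq n]
    {M : Matrix n n ℝ} {d : n → ℝ} (hM : M * Mᵀ = 1) (h : (M * diagonal d * Mᵀ).PosDef) (i : n) :
    0 < d i := by
  have hMt : Mᵀ * M = 1 := mul_eq_one_comm.mp hM
  have hinj : Function.Injective M.mulVec := fun x y hxy => by
    simpa [mulVec_mulVec, hMt] using congrArg (Mᵀ *ᵥ ·) hxy
  have hconj : Mᵀ * (M * diagonal d * Mᵀ) * M = diagonal d := by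
    simp only [← Matrix.mul_assoc, hMt, Matrix.one_mul]
    rw [Matrix.mul_assoc, hMt, Matrix.mul_one]
  have := h.conjTranspose_mul_mul_same hinj
  rw [conjTranspose_eq_transpose_of_trivial, hconj] at this
  exact posDef_diagonal_iff.1 this i

end Matrix

theorem Fin.sum_ite_lt_lt_sum_of_monotone {R : Type*} [AddCommMonoid R] [PartialOrder R]
    [IsOrderedCancelAddMonoid R] {m r : ℕ} {δ : Fin m → R} (hδ : Monotone δ) (hr : r < m)
    (hpos : 0 < δ ⟨r, hr⟩) :
    (∑ i : Fin m, if (i : ℕ) < r then δ i else 0) < ∑ i, δ i := by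
  have htail : ∀ i : Fin m, ¬ (i : ℕ) < r → 0 < δ i := fun i hi =>
    hpos.trans_le (hδ (Fin.mk_le_of_le_val (not_lt.1 hi)))
  refine Finset.sum_lt_sum (fun i _ => ?_) ⟨⟨r, hr⟩, Finset.mem_univ _, by simpa using hpos⟩
  split_ifs with hi
  · exact le_rfl
  · exact (htail i hi).le

theorem stmt19 {m : ℕ} (P Rx K : Matrix (Fin m) (Fin m) ℝ)
    (hP : P.PosDef) (ε : ℝ) (hε : 0 < ε)
    (r : ℕ) (hrm : r < m)
    (υ γ δ : Fin m → ℝ)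
    (MP NR E : Matrix (Fin m) (Fin m) ℝ)
    (hMP : MP * MPᵀ = 1) (hPeq : P = MP * Matrix.diagonal υ * MPᵀ)
    (hυ : Antitone υ)
    (hNR : NR * NRᵀ = 1) (hRxeq : Rx = NR * Matrix.diagonal γ * NRᵀ)
    (hγ : Antitone γ)
    (hK : K = ε • P⁻¹ - Rx)
    (hE : E * Eᵀ = 1) (hKeq : K = E * Matrix.diagonal δ * Eᵀ)
    (hδ : Monotone δ)
    (hcond : ε > υ ⟨r, hrm⟩ * γ ⟨0, by omega⟩) :
    (∑ i : Fin m, if (i : ℕ) < r then δ i else 0) < ∑ i : Fin m, δ i := by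
  set k : Fin m := ⟨r, hrm⟩
  have hυ_pos : ∀ i, 0 < υ i := pos_of_posDef_conj_diagonal hMP (hPeq ▸ hP)
  -- `x` lies in the span of the first `r + 1` eigenvectors of `K` and of the last `m - r` of `P`.
  obtain ⟨x, hx0, hxE, hxMP⟩ := exists_ne_zero_mulVec_eq_zero_of_lt_of_gt Eᵀ MPᵀ k
  have hK_le : x ⬝ᵥ (K *ᵥ x) ≤ δ k * (x ⬝ᵥ x) := hKeq ▸
    dotProduct_conj_diagonal_mulVec_le hE fun j hj => hδ (not_lt.1 (mt (hxE j) hj))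
  have hPinv_ge : (υ k)⁻¹ * (x ⬝ᵥ x) ≤ x ⬝ᵥ (P⁻¹ *ᵥ x) := by
    rw [hPeq, inv_conj_diagonal hMP fun i => (hυ_pos i).ne']
    exact le_dotProduct_conj_diagonal_mulVec hMP fun j hj =>
      inv_anti₀ (hυ_pos j) (hυ (not_lt.1 (mt (hxMP j) hj)))
  have hRx_le : x ⬝ᵥ (Rx *ᵥ x) ≤ γ ⟨0, by omega⟩ * (x ⬝ᵥ x) := hRxeq ▸
    dotProduct_conj_diagonal_mulVec_le hNR fun j _ => hγ (Fin.mk_le_of_le_val j.val.zero_le)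
  have hxx : 0 < x ⬝ᵥ x := by simpa using dotProduct_star_self_pos_iff.2 hx0
  have hgap : γ ⟨0, by omega⟩ < ε * (υ k)⁻¹ := by
    rwa [← div_eq_mul_inv, lt_div_iff₀ (hυ_pos k), mul_comm]
  have hδk : 0 < δ k * (x ⬝ᵥ x) := calc
    0 < (ε * (υ k)⁻¹ - γ ⟨0, by omega⟩) * (x ⬝ᵥ x) := mul_pos (sub_pos.2 hgap) hxx
    _ ≤ ε * (x ⬝ᵥ (P⁻¹ *ᵥ x)) - x ⬝ᵥ (Rx *ᵥ x) := by
      nlinarith [mul_le_mul_of_nonneg_left hPinv_ge hε.le]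
    _ = x ⬝ᵥ (K *ᵥ x) := by
      rw [hK, sub_mulVec, dotProduct_sub, smul_mulVec, dotProduct_smul, smul_eq_mul]
    _ ≤ δ k * (x ⬝ᵥ x) := hK_le
  exact Fin.sum_ite_lt_lt_sum_of_monotone hδ hrm (pos_of_mul_pos_left hδk hxx.le)
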